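/- Let 0 ≤ e < 1/4, φ(x) = (1-x)^2 + e*x^2, and x3* = (3 - √(5-4e))/(2(1+e)). Then |φ'(x3*)| = |1 - √(5-4e)| > 1; i.e., x3* is a repelling fixed point of φ. -/

import Mathlib

theorem hasDerivAt_one_sub_sq_add_mul_sq (e x : ℝ) :
    HasDerivAt (fun x : ℝ => (1 - x) ^ 2 + e * x ^ 2) (-2 * (1 - x) + 2 * e * x) x := by
  have h := (((hasDerivAt_id' x).const_sub 1).fun_pow 2).fun_add
    (((hasDerivAt_id' x).fun_pow 2).const_mul e)
  exact h.congr_deriv (by norm_num; ring)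

-- Holds because `-2 (1 - x) + 2 e x = 2 (1 + e) x - 2`.
theorem neg_two_mul_one_sub_add_eq_one_sub {e : ℝ} (he : 1 + e ≠ 0) (s : ℝ) :
    -2 * (1 - (3 - s) / (2 * (1 + e))) + 2 * e * ((3 - s) / (2 * (1 + e))) = 1 - s := by
  field_simp
  ring

theorem one_lt_abs_one_sub_sqrt_five_sub {e : ℝ} (he : e < 1 / 4) :
    1 < |1 - Real.sqrt (5 - 4 * e)| := by
  have h2 : 2 < Real.sqrt (5 - 4 * e) := Real.lt_sqrt_of_sq_lt (by linarith)
  rw [abs_of_neg (by linarith)]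
  linarith

/-- For 0 ≤ e < 1/4, |φ'(x3*)| = |1 - √(5-4e)| > 1: x3* is repelling. -/
theorem stmt_13 (e : ℝ) (he0 : 0 ≤ e) (he1 : e < 1/4)
    (φ : ℝ → ℝ) (hφ : ∀ x, φ x = (1 - x)^2 + e * x^2)
    (x3s : ℝ) (hx3s : x3s = (3 - Real.sqrt (5 - 4*e)) / (2 * (1 + e))) :
    deriv φ x3s = -2 * (1 - x3s) + 2 * e * x3s ∧
    |deriv φ x3s| = |1 - Real.sqrt (5 - 4*e)| ∧
    1 < |1 - Real.sqrt (5 - 4*e)| := by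
  obtain rfl : φ = fun x => (1 - x) ^ 2 + e * x ^ 2 := funext hφ
  have hderiv := (hasDerivAt_one_sub_sq_add_mul_sq e x3s).deriv
  have hvalue : -2 * (1 - x3s) + 2 * e * x3s = 1 - Real.sqrt (5 - 4 * e) := by
    rw [hx3s]
    exact neg_two_mul_one_sub_add_eq_one_sub (by linarith) _
  exact ⟨hderiv, by rw [hderiv, hvalue], one_lt_abs_one_sub_sqrt_five_sub he1⟩
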